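/- (Subdifferential sum rule.) Let X be a real vector space and φ₁, φ₂ : X → ℝ ∪ {+∞} proper convex functions satisfying the epigraphical core qualification condition core(epi(φ₁)) ∩ core(epi(φ₂)) ≠ ∅. Then for every x̄ ∈ dom(φ₁) ∩ dom(φ₂), ∂(φ₁+φ₂)(x̄) = ∂φ₁(x̄) + ∂φ₂(x̄), where the right-hand side is the set of sums f₁ + f₂ with f_i ∈ ∂φ_i(x̄). -/

import Mathlib

/-- The algebraic core of a set `Ω` in a real vector space. -/
def algCore {X : Type*} [AddCommGroup X] [Module ℝ X] (Ω : Set X) : Set X :=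
  {x | x ∈ Ω ∧ ∀ v : X, ∃ δ > (0 : ℝ), ∀ t : ℝ, |t| < δ → x + t • v ∈ Ω}

/-- The epigraph of an extended-real-valued (`ℝ ∪ {+∞}`) function. -/
def epi {X : Type*} (φ : X → WithTop ℝ) : Set (X × ℝ) :=
  {p | φ p.1 ≤ (p.2 : WithTop ℝ)}

/-- The subdifferential of an extended-real-valued function `φ` at `xb`. -/
def subdiff {X : Type*} [AddCommGroup X] [Module ℝ X] (φ : X → WithTop ℝ) (xb : X) :
    Set (X →ₗ[ℝ] ℝ) :=
  {f | ∀ x : X, φ xb + ((f (x - xb) : ℝ) : WithTop ℝ) ≤ φ x}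

/-!
Subtracting `f` from `φ₁` turns `f ∈ ∂(φ₁ + φ₂)(x₀)` into a statement about the convex set
`C = epi (φ₁ - f) + epi (φ₂ ∘ Neg.neg) ⊆ X × ℝ`: its lowest point above `0` is
`(0, m)` with `m = φ₁ x₀ - f x₀ + φ₂ x₀`. A point of `core (epi φ₁) ∩ epi φ₂` makes the projection
of `C` to `X` absorbing, so the M. Riesz extension theorem, applied to the cone generated by
`C - (0, m)` and the height functional on the vertical axis, puts `C` above an affine function
`m + g` with `g` linear. Fixing one of the two summands of a point of `C` at `(x₀, φᵢ x₀)` reads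
this as `f + g ∈ ∂φ₁(x₀)` and `-g ∈ ∂φ₂(x₀)`.
-/

section

variable {X : Type*} [AddCommGroup X] [Module ℝ X]

theorem exists_pos_add_smul_mem_of_mem_algCore {Ω : Set X} {x : X} (hx : x ∈ algCore Ω)
    (v : X) : ∃ s > (0 : ℝ), x + s • v ∈ Ω := by
  obtain ⟨δ, hδ, hmem⟩ := hx.2 v
  exact ⟨δ / 2, half_pos hδ, hmem _ (by rw [abs_of_pos (half_pos hδ)]; exact half_lt_self hδ)⟩

theorem mem_subdiff_iff_of_eq_coe {φ : X → WithTop ℝ} {x₀ : X} {r : ℝ} (hr : φ x₀ = r)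
    {f : X →ₗ[ℝ] ℝ} : f ∈ subdiff φ x₀ ↔ ∀ p ∈ epi φ, r + f (p.1 - x₀) ≤ p.2 := by
  constructor
  · intro hf p hp
    have := (hf p.1).trans hp
    rwa [hr, ← WithTop.coe_add, WithTop.coe_le_coe] at this
  · intro h x
    cases hx : φ x with
    | top => exact le_top
    | coe s =>
      rw [hr, ← WithTop.coe_add, WithTop.coe_le_coe]
      exact h (x, s) (by simp [epi, hx])

theorem add_mem_subdiff_add {φ₁ φ₂ : X → WithTop ℝ} {x₀ : X} {f₁ f₂ : X →ₗ[ℝ] ℝ}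
    (hf₁ : f₁ ∈ subdiff φ₁ x₀) (hf₂ : f₂ ∈ subdiff φ₂ x₀) :
    f₁ + f₂ ∈ subdiff (fun x => φ₁ x + φ₂ x) x₀ := fun x =>
  calc φ₁ x₀ + φ₂ x₀ + ((f₁ + f₂) (x - x₀) : WithTop ℝ)
      = (φ₁ x₀ + (f₁ (x - x₀) : WithTop ℝ)) + (φ₂ x₀ + (f₂ (x - x₀) : WithTop ℝ)) := by
        rw [LinearMap.add_apply, WithTop.coe_add, add_add_add_comm]
    _ ≤ φ₁ x + φ₂ x := add_le_add (hf₁ x) (hf₂ x)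

theorem exists_linearMap_add_le_of_isLeast {C : Set (X × ℝ)} (hC : Convex ℝ C) {m : ℝ} (hm : IsLeast {c | ((0 : X), c) ∈ C} m)
    (habs : ∀ v : X, ∃ s > (0 : ℝ), ∃ γ : ℝ, (s • v, γ) ∈ C) :
    ∃ g : X →ₗ[ℝ] ℝ, ∀ p ∈ C, m + g p.1 ≤ p.2 := by
  set C' := (fun p => ((0 : X), m) + p) ⁻¹' C
  have hmem : ∀ p, p ∈ ConvexCone.hull ℝ C' ↔ ∃ r > (0 : ℝ), ((0 : X), m) + r⁻¹ • p ∈ C := by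
    intro p
    rw [ConvexCone.mem_hull_of_convex (hC.translate_preimage_right _)]
    refine exists_congr fun r => and_congr_right fun hr => ?_
    rw [Set.mem_smul_set_iff_inv_smul_mem₀ hr.ne']
    rfl
  let K := (ConvexCone.hull ℝ C').toPointedCone (ConvexCone.subset_hull (by simpa [C'] using hm.1))
  let vert := (LinearMap.snd ℝ X ℝ).toPMap (LinearMap.range (LinearMap.inr ℝ X ℝ))
  have hnonneg : ∀ x : vert.domain, (x : X × ℝ) ∈ K → 0 ≤ vert x := by
    rintro ⟨_, c, rfl⟩ hc
    obtain ⟨r, hr, hrc⟩ := (hmem _).1 hc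
    have := hm.2 (by simpa using hrc)
    show 0 ≤ c
    exact (mul_nonneg_iff_of_pos_left (inv_pos.2 hr)).1 (by linarith)
  have hdense : ∀ y, ∃ x : vert.domain, (x : X × ℝ) + y ∈ K := by
    rintro ⟨v, α⟩
    obtain ⟨s, hs, γ, hγ⟩ := habs v
    refine ⟨⟨(0, (γ - m) / s - α), (γ - m) / s - α, rfl⟩, (hmem _).2 ⟨s⁻¹, inv_pos.2 hs, ?_⟩⟩
    convert hγ using 1
    ext <;> simp
    field_simp
    ring
  obtain ⟨G, hGvert, hGK⟩ := riesz_extension K vert hnonneg hdense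
  refine ⟨-(G ∘ₗ LinearMap.inl ℝ X ℝ), fun p hp => ?_⟩
  have hvert : G (0, 1) = 1 := hGvert ⟨(0, 1), 1, rfl⟩
  have hsplit : p - ((0 : X), m) = (p.1, 0) + (p.2 - m) • ((0 : X), (1 : ℝ)) := by
    ext <;> simp
  have := hGK (p - ((0 : X), m)) ((hmem _).2 ⟨1, one_pos, by simpa using hp⟩)
  rw [hsplit, map_add, map_smul, hvert, smul_eq_mul, mul_one] at this
  simp only [LinearMap.neg_apply, LinearMap.comp_apply, LinearMap.inl_apply]
  linarith

-- The Minkowski sum of the epigraphs of `φ₁ - f` and of `φ₂ ∘ Neg.neg`.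
def epiDiff (φ₁ φ₂ : X → WithTop ℝ) (f : X →ₗ[ℝ] ℝ) : Set (X × ℝ) :=
  Set.image2 (fun p q => (p.1 - q.1, p.2 - f p.1 + q.2)) (epi φ₁) (epi φ₂)

theorem convex_epiDiff {φ₁ φ₂ : X → WithTop ℝ} (hc₁ : Convex ℝ (epi φ₁))
    (hc₂ : Convex ℝ (epi φ₂)) (f : X →ₗ[ℝ] ℝ) : Convex ℝ (epiDiff φ₁ φ₂ f) := by
  rintro _ ⟨p, hp, q, hq, rfl⟩ _ ⟨p', hp', q', hq', rfl⟩ a b ha hb hab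
  refine ⟨a • p + b • p', hc₁ hp hp' ha hb hab, a • q + b • q', hc₂ hq hq' ha hb hab, ?_⟩
  ext
  · simp only [Prod.fst_add, Prod.smul_fst, smul_sub]
    abel
  · simp only [Prod.snd_add, Prod.smul_snd, Prod.fst_add, Prod.smul_fst, map_add, map_smul,
      smul_eq_mul]
    ring

theorem isLeast_epiDiff {φ₁ φ₂ : X → WithTop ℝ} {x₀ : X} {r₁ r₂ : ℝ} (hr₁ : φ₁ x₀ = r₁)
    (hr₂ : φ₂ x₀ = r₂) {f : X →ₗ[ℝ] ℝ} (hf : f ∈ subdiff (fun x => φ₁ x + φ₂ x) x₀) :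
    IsLeast {c | ((0 : X), c) ∈ epiDiff φ₁ φ₂ f} (r₁ - f x₀ + r₂) := by
  refine ⟨⟨(x₀, r₁), hr₁.le, (x₀, r₂), hr₂.le, by simp⟩, ?_⟩
  rintro c ⟨p, hp, q, hq, hpq⟩
  simp only [Prod.mk.injEq, sub_eq_zero] at hpq
  obtain ⟨hpq, rfl⟩ := hpq
  have hsum : φ₁ x₀ + φ₂ x₀ = ((r₁ + r₂ : ℝ) : WithTop ℝ) := by
    rw [hr₁, hr₂, WithTop.coe_add]
  have hpq_epi : (p.1, p.2 + q.2) ∈ epi (fun x => φ₁ x + φ₂ x) := by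
    show φ₁ p.1 + φ₂ p.1 ≤ ((p.2 + q.2 : ℝ) : WithTop ℝ)
    rw [WithTop.coe_add]
    exact add_le_add hp (by rw [hpq]; exact hq)
  have := (mem_subdiff_iff_of_eq_coe (φ := fun x => φ₁ x + φ₂ x) hsum).1 hf _ hpq_epi
  simp only [map_sub] at this
  linarith

theorem exists_pos_smul_mem_epiDiff {φ₁ φ₂ : X → WithTop ℝ} {z : X × ℝ}
    (hz₁ : z ∈ algCore (epi φ₁)) (hz₂ : z ∈ epi φ₂) (f : X →ₗ[ℝ] ℝ) (v : X) :
    ∃ s > (0 : ℝ), ∃ γ : ℝ, (s • v, γ) ∈ epiDiff φ₁ φ₂ f := by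
  obtain ⟨s, hs, hsv⟩ := exists_pos_add_smul_mem_of_mem_algCore hz₁ (v, 0)
  exact ⟨s, hs, z.2 - f (z.1 + s • v) + z.2, _, hsv, z, hz₂, by simp⟩

theorem exists_mem_subdiff_add_eq_of_mem_subdiff_add {φ₁ φ₂ : X → WithTop ℝ}
    (hc₁ : Convex ℝ (epi φ₁)) (hc₂ : Convex ℝ (epi φ₂)) {z : X × ℝ}
    (hz₁ : z ∈ algCore (epi φ₁)) (hz₂ : z ∈ epi φ₂) {x₀ : X} (h₁ : φ₁ x₀ ≠ ⊤) (h₂ : φ₂ x₀ ≠ ⊤)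
    {f : X →ₗ[ℝ] ℝ} (hf : f ∈ subdiff (fun x => φ₁ x + φ₂ x) x₀) :
    ∃ f₁ ∈ subdiff φ₁ x₀, ∃ f₂ ∈ subdiff φ₂ x₀, f = f₁ + f₂ := by
  obtain ⟨r₁, hr₁⟩ := WithTop.ne_top_iff_exists.mp h₁
  obtain ⟨r₂, hr₂⟩ := WithTop.ne_top_iff_exists.mp h₂
  obtain ⟨g, hg⟩ := exists_linearMap_add_le_of_isLeast (convex_epiDiff hc₁ hc₂ f)
    (isLeast_epiDiff hr₁.symm hr₂.symm hf) (exists_pos_smul_mem_epiDiff hz₁ hz₂ f)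
  refine ⟨f + g, (mem_subdiff_iff_of_eq_coe hr₁.symm).2 fun p hp => ?_,
    -g, (mem_subdiff_iff_of_eq_coe hr₂.symm).2 fun q hq => ?_, by abel⟩
  · have := hg _ ⟨p, hp, (x₀, r₂), hr₂.ge, rfl⟩
    simp only [map_sub] at this
    simp only [LinearMap.add_apply, map_sub]
    linarith
  · have := hg _ ⟨(x₀, r₁), hr₁.ge, q, hq, rfl⟩
    simp only [map_sub] at this
    simp only [LinearMap.neg_apply, map_sub]
    linarith

end

theorem subdifferential_sum_rule_general {X : Type*} [AddCommGroup X] [Module ℝ X]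
    (φ₁ φ₂ : X → WithTop ℝ)
    (hc₁ : Convex ℝ (epi φ₁)) (hc₂ : Convex ℝ (epi φ₂))
    (hqc : (algCore (epi φ₁) ∩ algCore (epi φ₂)).Nonempty) :
    ∀ xb : X, φ₁ xb ≠ ⊤ → φ₂ xb ≠ ⊤ →
      subdiff (fun x => φ₁ x + φ₂ x) xb
        = {f | ∃ f₁ ∈ subdiff φ₁ xb, ∃ f₂ ∈ subdiff φ₂ xb, f = f₁ + f₂} := by
  intro xb h₁ h₂
  obtain ⟨z, hz₁, hz₂⟩ := hqc
  ext f
  refine ⟨exists_mem_subdiff_add_eq_of_mem_subdiff_add hc₁ hc₂ hz₁ hz₂.1 h₁ h₂, ?_⟩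
  rintro ⟨f₁, hf₁, f₂, hf₂, rfl⟩
  exact add_mem_subdiff_add hf₁ hf₂

theorem subdifferential_sum_rule {X : Type*} [AddCommGroup X] [Module ℝ X]
    (φ₁ φ₂ : X → WithTop ℝ)
    (hp₁ : ∃ x, φ₁ x ≠ ⊤) (hp₂ : ∃ x, φ₂ x ≠ ⊤)
    (hc₁ : Convex ℝ (epi φ₁)) (hc₂ : Convex ℝ (epi φ₂))
    (hqc : (algCore (epi φ₁) ∩ algCore (epi φ₂)).Nonempty) :
    ∀ xb : X, φ₁ xb ≠ ⊤ → φ₂ xb ≠ ⊤ →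
      subdiff (fun x => φ₁ x + φ₂ x) xb
        = {f | ∃ f₁ ∈ subdiff φ₁ xb, ∃ f₂ ∈ subdiff φ₂ xb, f = f₁ + f₂} :=
  subdifferential_sum_rule_general φ₁ φ₂ hc₁ hc₂ hqc
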